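/- The expansion of an element of cs^λ with respect to the sequences e_λ^(n) is unique: if x ∈ cs^λ and α : ℕ → ℂ is a sequence of scalars such that ‖x − ∑_{n=0}^M α_n·e_λ^(n)‖_{bs^λ} → 0 as M → ∞, then α_k = Λ_k(x) for every k ∈ ℕ. -/

import Mathlib

open Filter Topology

/-- `dl l k = λ_k - λ_{k-1}` with the convention `λ_{-1} = 0`. -/
noncomputable def dl (l : ℕ → ℝ) (k : ℕ) : ℝ := l k - (if k = 0 then 0 else l (k - 1))

/-- `LamT l x n = Λ_n(x) = (1/λ_n) ∑_{k=0}^n (λ_k - λ_{k-1}) x_k`. -/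
noncomputable def LamT (l : ℕ → ℝ) (x : ℕ → ℂ) (n : ℕ) : ℂ :=
  (1 / (l n : ℂ)) * ∑ k ∈ Finset.range (n + 1), ((dl l k : ℝ) : ℂ) * x k

/-- `cs^λ`: the partial sums `∑_{n=0}^m Λ_n(x)` converge. -/
def csLam (l : ℕ → ℝ) : Set (ℕ → ℂ) :=
  {x | ∃ L, Tendsto (fun m => ∑ n ∈ Finset.range (m + 1), LamT l x n) atTop (𝓝 L)}

/-- `cs₀^λ`: the partial sums `∑_{n=0}^m Λ_n(x)` tend to `0`. -/
def cs0Lam (l : ℕ → ℝ) : Set (ℕ → ℂ) :=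
  {x | Tendsto (fun m => ∑ n ∈ Finset.range (m + 1), LamT l x n) atTop (𝓝 0)}

/-- `bs^λ`: the partial sums `∑_{n=0}^m Λ_n(x)` are bounded. -/
def bsLam (l : ℕ → ℝ) : Set (ℕ → ℂ) :=
  {x | ∃ C, ∀ m, ‖∑ n ∈ Finset.range (m + 1), LamT l x n‖ ≤ C}

/-- The norm `‖x‖_{bs^λ} = sup_m |∑_{n=0}^m Λ_n(x)|`. -/
noncomputable def bsLamNorm (l : ℕ → ℝ) (x : ℕ → ℂ) : ℝ :=
  ⨆ m, ‖∑ n ∈ Finset.range (m + 1), LamT l x n‖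

/-- The basis sequence `e_λ^(n)`:
`(e_λ^(n))_k = (-1)^{k-n} λ_n/(λ_k - λ_{k-1})` if `n ≤ k ≤ n+1`, and `0` otherwise. -/
noncomputable def eLam (l : ℕ → ℝ) (n : ℕ) (k : ℕ) : ℂ :=
  if n ≤ k ∧ k ≤ n + 1 then (-1 : ℂ) ^ (k - n) * (l n : ℂ) / ((dl l k : ℝ) : ℂ) else 0

/-!
Since `Λ_m(e_λ^(n)) = δ_{mn}`, for `m ≤ M` the `m`-th partial sum of `Λ(x - ∑_{n ≤ M} α_n e_λ^(n))`
is `∑_{j ≤ m} (Λ_j(x) - α_j)`. It is bounded by the `bs^λ`-norm, which tends to `0`, so the partial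
sums of `Λ(x)` and of `α` agree. The norm is a `⨆`, which is `0` on unbounded families; it is a genuine
bound here because `x - ∑_{n ≤ M} α_n e_λ^(n)` stays in `cs^λ ⊆ bs^λ`.
-/

open Finset

lemma sum_range_ite_le {M : Type*} [AddCommMonoid M] (f : ℕ → M) (N m : ℕ) :
    ∑ j ∈ range (m + 1), (if j ≤ N then f j else 0) = ∑ j ∈ range (min m N + 1), f j := by
  rw [← sum_filter]
  congr 1
  ext j
  simp only [mem_filter, mem_range]
  omega

lemma eq_of_sum_range_succ_eq {M : Type*} [AddCommGroup M] {f g : ℕ → M}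
    (h : ∀ m, ∑ j ∈ range (m + 1), f j = ∑ j ∈ range (m + 1), g j) : f = g := by
  funext k
  cases k with
  | zero => simpa using h 0
  | succ k => rw [← sum_range_succ_sub_sum f, ← sum_range_succ_sub_sum g, h, h]

lemma mem_bsLam_iff_bddAbove {l : ℕ → ℝ} {x : ℕ → ℂ} :
    x ∈ bsLam l ↔ BddAbove (Set.range fun m => ‖∑ n ∈ range (m + 1), LamT l x n‖) := by
  simp only [bddAbove_def, Set.forall_mem_range, bsLam, Set.mem_ofPred_eq]

lemma csLam_subset_bsLam (l : ℕ → ℝ) : csLam l ⊆ bsLam l := fun _ ⟨_, hL⟩ =>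
  mem_bsLam_iff_bddAbove.2 hL.norm.bddAbove_range

lemma norm_sum_LamT_le_bsLamNorm {l : ℕ → ℝ} {x : ℕ → ℂ} (hx : x ∈ bsLam l) (m : ℕ) :
    ‖∑ n ∈ range (m + 1), LamT l x n‖ ≤ bsLamNorm l x :=
  le_ciSup (mem_bsLam_iff_bddAbove.1 hx) m

section

variable {l : ℕ → ℝ}

lemma dl_pos (hmono : StrictMono l) (hpos : 0 < l 0) (k : ℕ) : 0 < dl l k := by
  cases k with
  | zero => simpa [dl] using hpos
  | succ j => simpa [dl] using hmono (Nat.lt_succ_self j)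

lemma LamT_sub (x y : ℕ → ℂ) (j : ℕ) : LamT l (x - y) j = LamT l x j - LamT l y j := by
  simp only [LamT, Pi.sub_apply, mul_sub, sum_sub_distrib]

lemma LamT_sum_mul {ι : Type*} (s : Finset ι) (α : ι → ℂ) (f : ι → ℕ → ℂ) (j : ℕ) :
    LamT l (fun k => ∑ n ∈ s, α n * f n k) j = ∑ n ∈ s, α n * LamT l (f n) j := by
  simp only [LamT, mul_sum]
  rw [sum_comm]
  refine sum_congr rfl fun n _ => sum_congr rfl fun k _ => by ring

lemma LamT_eLam (hl : ∀ n, l n ≠ 0) (hdl : ∀ k, dl l k ≠ 0) (n m : ℕ) :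
    LamT l (eLam l n) m = if m = n then 1 else 0 := by
  have hl' : (l n : ℂ) ≠ 0 := by exact_mod_cast hl n
  have hdl' : ∀ k, (dl l k : ℂ) ≠ 0 := fun k => by exact_mod_cast hdl k
  have hsupp : ∀ k, k ≠ n → k ≠ n + 1 → eLam l n k = 0 := fun k h₀ h₁ => by
    rw [eLam, if_neg (by omega)]
  have hsum : ∑ k ∈ range (m + 1), (dl l k : ℂ) * eLam l n k =
      if m < n then 0 else if m = n then (l n : ℂ) else 0 := by
    rcases lt_trichotomy m n with h | rfl | h
    · rw [if_pos h]
      exact sum_eq_zero fun k hk => by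
        rw [hsupp k (by simp at hk; omega) (by simp at hk; omega), mul_zero]
    · rw [sum_range_succ, sum_eq_zero fun k hk => by
        rw [hsupp k (by simp at hk; omega) (by simp at hk; omega), mul_zero]]
      simp [eLam, mul_div_cancel₀ _ (hdl' m)]
    · rw [if_neg (by omega), if_neg h.ne', ← sum_subset (s₁ := {n, n + 1})
        (by intro k; simp; omega) (fun k _ hk => by simp at hk; rw [hsupp k hk.1 hk.2, mul_zero]),
        sum_pair (by omega)]
      simp [eLam, mul_div_cancel₀ _ (hdl' n), mul_div_cancel₀ _ (hdl' (n + 1))]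
  rw [LamT, hsum]
  split_ifs <;> first | omega | simp_all

noncomputable def expansion (l : ℕ → ℝ) (α : ℕ → ℂ) (M : ℕ) : ℕ → ℂ :=
  fun k => ∑ n ∈ range (M + 1), α n * eLam l n k

lemma LamT_expansion (hl : ∀ n, l n ≠ 0) (hdl : ∀ k, dl l k ≠ 0) (α : ℕ → ℂ)
    (M j : ℕ) :
    LamT l (expansion l α M) j = if j ≤ M then α j else 0 := by
  unfold expansion
  rw [LamT_sum_mul]
  simp only [LamT_eLam hl hdl, mul_ite, mul_one, mul_zero, sum_ite_eq, mem_range,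
    Nat.lt_succ_iff]

lemma sum_LamT_sub_expansion (hl : ∀ n, l n ≠ 0) (hdl : ∀ k, dl l k ≠ 0)
    (x α : ℕ → ℂ) (M m : ℕ) :
    ∑ j ∈ range (m + 1), LamT l (x - expansion l α M) j =
      ∑ j ∈ range (m + 1), LamT l x j - ∑ j ∈ range (min m M + 1), α j := by
  simp only [LamT_sub, LamT_expansion hl hdl, sum_sub_distrib, sum_range_ite_le]

lemma sub_expansion_mem_csLam (hl : ∀ n, l n ≠ 0) (hdl : ∀ k, dl l k ≠ 0)
    {x : ℕ → ℂ} (hx : x ∈ csLam l) (α : ℕ → ℂ) (M : ℕ) :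
    x - expansion l α M ∈ csLam l := by
  obtain ⟨L, hL⟩ := hx
  refine ⟨L - ∑ j ∈ range (M + 1), α j, (hL.sub_const _).congr' ?_⟩
  filter_upwards [eventually_ge_atTop M] with m hm
  rw [sum_LamT_sub_expansion hl hdl, min_eq_right hm]

lemma norm_sum_LamT_sub_le_bsLamNorm (hl : ∀ n, l n ≠ 0) (hdl : ∀ k, dl l k ≠ 0)
    {x : ℕ → ℂ} (hx : x ∈ csLam l) (α : ℕ → ℂ) {m M : ℕ} (hmM : m ≤ M) :
    ‖∑ j ∈ range (m + 1), LamT l x j - ∑ j ∈ range (m + 1), α j‖ ≤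
      bsLamNorm l (x - expansion l α M) := by
  have h := norm_sum_LamT_le_bsLamNorm
    (csLam_subset_bsLam l (sub_expansion_mem_csLam hl hdl hx α M)) m
  rwa [sum_LamT_sub_expansion hl hdl, min_eq_left hmM] at h

end

theorem stmt10_general (l : ℕ → ℝ) (hmono : StrictMono l) (hpos : 0 < l 0)
    (x : ℕ → ℂ) (hx : x ∈ csLam l) (α : ℕ → ℂ)
    (hα : Tendsto (fun M => bsLamNorm l
      (fun k => x k - ∑ n ∈ Finset.range (M + 1), α n * eLam l n k)) atTop (𝓝 0)) :
    ∀ k, α k = LamT l x k := by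
  have hl : ∀ n, l n ≠ 0 := fun n => (hpos.trans_le (hmono.monotone n.zero_le)).ne'
  have hdl : ∀ k, dl l k ≠ 0 := fun k => (dl_pos hmono hpos k).ne'
  refine congrFun (eq_of_sum_range_succ_eq fun m => ?_).symm
  have hle : ‖∑ j ∈ range (m + 1), LamT l x j - ∑ j ∈ range (m + 1), α j‖ ≤ 0 :=
    ge_of_tendsto hα <| (eventually_ge_atTop m).mono fun M hM =>
      norm_sum_LamT_sub_le_bsLamNorm hl hdl hx α hM
  exact sub_eq_zero.1 (norm_le_zero_iff.1 hle)

theorem stmt10 (l : ℕ → ℝ) (hmono : StrictMono l) (hpos : 0 < l 0)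
    (hlim : Tendsto l atTop atTop) (x : ℕ → ℂ) (hx : x ∈ csLam l) (α : ℕ → ℂ)
    (hα : Tendsto (fun M => bsLamNorm l
      (fun k => x k - ∑ n ∈ Finset.range (M + 1), α n * eLam l n k)) atTop (𝓝 0)) :
    ∀ k, α k = LamT l x k :=
  stmt10_general l hmono hpos x hx α hα
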